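/- Let m ≥ 1, k ≥ 1, and let A be a real symmetric m×m matrix. Let Q be a random m×k matrix whose entries are independent standard normal N(0,1) random variables. Then E[Q Qᵀ A Q Qᵀ] = k(k+1)·A + k·(tr A)·I, where I is the m×m identity matrix. -/

import Mathlib

open Matrix MeasureTheory ProbabilityTheory Real

/-!
With `W = QQᵀ`, `(WAW)(i,j) = ∑ p q, A(p,q) W(i,p) W(q,j)` and
`W(i,p) W(q,j) = ∑ a b, Q(i,a) Q(p,a) Q(q,b) Q(j,b)`. Isserlis' (Wick's) formula for independent
standard Gaussians, `E[x₁x₂x₃x₄] = δ₁₂δ₃₄ + δ₁₃δ₂₄ + δ₁₄δ₂₃`, gives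
`E[W(i,p) W(q,j)] = k² δ(i,p) δ(q,j) + k (δ(i,q) δ(p,j) + δ(i,j) δ(p,q))`, and summing against `A`
yields `E[WAW] = k² A + k Aᵀ + k (tr A) I`, which is the claim when `A` is symmetric.
Isserlis' formula holds because the expectation of a monomial in independent coordinates is a
product of one-dimensional moments, and the moments `1, 0, 1, 3` of `N(0,1)` are the derivatives
at `0` of its moment generating function `exp (t² / 2)`.
-/

lemma hasDerivAt_mul_exp_sq_half {p : ℝ → ℝ} {p' t : ℝ} (hp : HasDerivAt p p' t) :
    HasDerivAt (fun t => p t * rexp (t ^ 2 / 2)) ((p' + t * p t) * rexp (t ^ 2 / 2)) t := by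
  have he : HasDerivAt (fun t : ℝ => rexp (t ^ 2 / 2)) (t * rexp (t ^ 2 / 2)) t :=
    ((hasDerivAt_pow 2 t).div_const 2).exp.congr_deriv (by push_cast; ring)
  exact (hp.mul he).congr_deriv (by ring)

lemma iteratedDeriv_two_exp_sq_half :
    iteratedDeriv 2 (fun t => rexp (t ^ 2 / 2)) = fun t => (1 + t ^ 2) * rexp (t ^ 2 / 2) := by
  have hderiv : deriv (fun t : ℝ => rexp (t ^ 2 / 2)) = fun t => t * rexp (t ^ 2 / 2) := by
    ext t
    simpa using (hasDerivAt_mul_exp_sq_half (hasDerivAt_const t (1 : ℝ))).deriv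
  rw [iteratedDeriv_succ, iteratedDeriv_one, hderiv]
  ext t
  exact (hasDerivAt_mul_exp_sq_half (hasDerivAt_id t)).deriv.trans (by simp only [id_eq]; ring)

lemma iteratedDeriv_three_exp_sq_half :
    iteratedDeriv 3 (fun t => rexp (t ^ 2 / 2)) = fun t => (3 * t + t ^ 3) * rexp (t ^ 2 / 2) := by
  rw [iteratedDeriv_succ, iteratedDeriv_two_exp_sq_half]
  ext t
  exact (hasDerivAt_mul_exp_sq_half ((hasDerivAt_pow 2 t).const_add 1)).deriv.trans
    (by push_cast; ring)

lemma integral_pow_gaussianReal_eq_iteratedDeriv (n : ℕ) :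
    ∫ x, x ^ n ∂gaussianReal 0 1 = iteratedDeriv n (fun t => rexp (t ^ 2 / 2)) 0 := by
  have h := iteratedDeriv_mgf_zero (X := id) (μ := gaussianReal 0 1) (by simp) n
  simp only [mgf_id_gaussianReal] at h
  simpa using h.symm

lemma integral_pow_two_gaussianReal : ∫ x, x ^ 2 ∂gaussianReal 0 1 = 1 := by
  simp [integral_pow_gaussianReal_eq_iteratedDeriv, iteratedDeriv_two_exp_sq_half]

lemma integral_pow_four_gaussianReal : ∫ x, x ^ 4 ∂gaussianReal 0 1 = 3 := by
  rw [integral_pow_gaussianReal_eq_iteratedDeriv, iteratedDeriv_succ,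
    iteratedDeriv_three_exp_sq_half]
  simpa using (hasDerivAt_mul_exp_sq_half
    (((hasDerivAt_id (0 : ℝ)).const_mul 3).add (hasDerivAt_pow 3 0))).deriv

section Isserlis

variable {ι : Type*} [Fintype ι] [DecidableEq ι]

lemma mul_mul_mul_eq_prod_pow (x : ι → ℝ) (α β γ δ : ι) :
    x α * x β * x γ * x δ = ∏ i, x i ^ ((if i = α then 1 else 0) + (if i = β then 1 else 0)
      + (if i = γ then 1 else 0) + (if i = δ then 1 else 0)) := by
  simp only [pow_add, Finset.prod_mul_distrib, pow_ite, pow_one, pow_zero, Finset.prod_ite_eq',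
    Finset.mem_univ, if_true]

lemma prod_moments_eq_sum_pairings (M : ℕ → ℝ) (h0 : M 0 = 1) (h1 : M 1 = 0) (h2 : M 2 = 1)
    (h4 : M 4 = 3) (α β γ δ : ι) :
    ∏ i, M ((if i = α then 1 else 0) + (if i = β then 1 else 0) + (if i = γ then 1 else 0)
      + (if i = δ then 1 else 0)) =
      (if α = β then 1 else 0) * (if γ = δ then 1 else 0)
      + (if α = γ then 1 else 0) * (if β = δ then 1 else 0)
      + (if α = δ then 1 else 0) * (if β = γ then 1 else 0) := by
  rw [← Finset.prod_subset (Finset.subset_univ {α, β, γ, δ}) (fun i _ hi => by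
    simp only [Finset.mem_insert, Finset.mem_singleton, not_or] at hi
    simp [hi.1, hi.2.1, hi.2.2.1, hi.2.2.2, h0])]
  -- both sides only depend on which of `α, β, γ, δ` coincide
  by_cases hαβ : α = β <;> by_cases hαγ : α = γ <;> by_cases hαδ : α = δ <;>
    by_cases hβγ : β = γ <;> by_cases hβδ : β = δ <;> by_cases hγδ : γ = δ <;>
    simp_all [Finset.prod_insert, eq_comm, one_add_one_eq_two, two_add_one_eq_three]

lemma integrable_mul_mul_mul_pi_gaussianReal (α β γ δ : ι) :
    Integrable (fun x => x α * x β * x γ * x δ) (Measure.pi fun _ : ι => gaussianReal 0 1) := by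
  simp_rw [mul_mul_mul_eq_prod_pow _ α β γ δ]
  exact Integrable.fintype_prod fun i =>
    integrable_pow_of_mem_interior_integrableExpSet (X := id) (by simp) _

theorem integral_mul_mul_mul_pi_gaussianReal (α β γ δ : ι) :
    ∫ x, x α * x β * x γ * x δ ∂(Measure.pi fun _ : ι => gaussianReal 0 1) =
      (if α = β then 1 else 0) * (if γ = δ then 1 else 0)
      + (if α = γ then 1 else 0) * (if β = δ then 1 else 0)
      + (if α = δ then 1 else 0) * (if β = γ then 1 else 0) := by
  simp_rw [mul_mul_mul_eq_prod_pow _ α β γ δ]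
  rw [integral_fintype_prod_eq_prod (fun i y => y ^ _)]
  exact prod_moments_eq_sum_pairings (fun n => ∫ y, y ^ n ∂gaussianReal 0 1) (by simp) (by simp)
    integral_pow_two_gaussianReal integral_pow_four_gaussianReal α β γ δ

end Isserlis

lemma pi_pi_eq_map_curry {ι κ X : Type*} [Fintype ι] [Fintype κ] [MeasurableSpace X]
    (ν : Measure X) [IsProbabilityMeasure ν] :
    (Measure.pi fun _ : ι => Measure.pi fun _ : κ => ν) =
      (Measure.pi fun _ : ι × κ => ν).map (MeasurableEquiv.curry ι κ X) := by
  simp_rw [← Measure.infinitePi_eq_pi]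
  exact (Measure.infinitePi_map_curry fun _ _ => ν).symm

lemma mul_transpose_apply_mul_mul_transpose_apply {ι κ : Type*} [Fintype κ] (Q : ι → κ → ℝ)
    (i p q j : ι) :
    (of Q * (of Q)ᵀ) i p * (of Q * (of Q)ᵀ) q j = ∑ a, ∑ b, Q i a * Q p a * Q q b * Q j b := by
  simp only [mul_apply, transpose_apply, of_apply, Finset.sum_mul_sum, mul_assoc]

section GaussianMatrix

variable {ι κ : Type*} [Fintype ι] [DecidableEq ι] [Fintype κ] [DecidableEq κ]

lemma integrable_mul_mul_mul_pi_pi_gaussianReal (i p q j : ι) (a b : κ) :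
    Integrable (fun Q : ι → κ → ℝ => Q i a * Q p a * Q q b * Q j b)
      (Measure.pi fun _ : ι => Measure.pi fun _ : κ => gaussianReal 0 1) := by
  rw [pi_pi_eq_map_curry, integrable_map_equiv]
  exact integrable_mul_mul_mul_pi_gaussianReal (i, a) (p, a) (q, b) (j, b)

lemma integral_mul_mul_mul_pi_pi_gaussianReal (i p q j : ι) (a b : κ) :
    ∫ Q : ι → κ → ℝ, Q i a * Q p a * Q q b * Q j b
        ∂(Measure.pi fun _ : ι => Measure.pi fun _ : κ => gaussianReal 0 1) =
      (if i = p then 1 else 0) * (if q = j then 1 else 0)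
      + (if a = b then 1 else 0) * ((if i = q then 1 else 0) * (if p = j then 1 else 0)
        + (if i = j then 1 else 0) * (if p = q then 1 else 0)) := by
  rw [pi_pi_eq_map_curry, integral_map_equiv]
  simp only [MeasurableEquiv.coe_curry, Function.curry_apply]
  rw [integral_mul_mul_mul_pi_gaussianReal]
  by_cases hab : a = b <;> simp [hab, add_assoc]

lemma integrable_mul_transpose_apply_mul_mul_transpose_apply (i p q j : ι) :
    Integrable (fun Q : ι → κ → ℝ => (of Q * (of Q)ᵀ) i p * (of Q * (of Q)ᵀ) q j)
      (Measure.pi fun _ : ι => Measure.pi fun _ : κ => gaussianReal 0 1) := by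
  simp_rw [mul_transpose_apply_mul_mul_transpose_apply]
  exact integrable_finsetSum _ fun a _ => integrable_finsetSum _ fun b _ =>
    integrable_mul_mul_mul_pi_pi_gaussianReal i p q j a b

theorem integral_mul_transpose_apply_mul_mul_transpose_apply (i p q j : ι) :
    ∫ Q : ι → κ → ℝ, (of Q * (of Q)ᵀ) i p * (of Q * (of Q)ᵀ) q j
        ∂(Measure.pi fun _ : ι => Measure.pi fun _ : κ => gaussianReal 0 1) =
      (Fintype.card κ : ℝ) ^ 2 * ((if i = p then 1 else 0) * (if q = j then 1 else 0))
      + Fintype.card κ * ((if i = q then 1 else 0) * (if p = j then 1 else 0)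
        + (if i = j then 1 else 0) * (if p = q then 1 else 0)) := by
  simp_rw [mul_transpose_apply_mul_mul_transpose_apply]
  rw [integral_finsetSum _ fun a _ => integrable_finsetSum _ fun b _ =>
    integrable_mul_mul_mul_pi_pi_gaussianReal i p q j a b]
  simp_rw [integral_finsetSum _ fun b _ => integrable_mul_mul_mul_pi_pi_gaussianReal i p q j _ b,
    integral_mul_mul_mul_pi_pi_gaussianReal]
  simp [Finset.sum_add_distrib, sq, mul_add, mul_ite]

theorem integral_mul_transpose_mul_mul_mul_transpose (A : Matrix ι ι ℝ) :
    (of fun i j => ∫ Q : ι → κ → ℝ, (of Q * (of Q)ᵀ * A * (of Q * (of Q)ᵀ)) i j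
        ∂(Measure.pi fun _ : ι => Measure.pi fun _ : κ => gaussianReal 0 1)) =
      ((Fintype.card κ : ℝ) ^ 2) • A + (Fintype.card κ : ℝ) • Aᵀ
        + ((Fintype.card κ : ℝ) * trace A) • (1 : Matrix ι ι ℝ) := by
  ext i j
  have hexpand (Q : ι → κ → ℝ) : (of Q * (of Q)ᵀ * A * (of Q * (of Q)ᵀ)) i j
      = ∑ p, ∑ q, A p q * ((of Q * (of Q)ᵀ) i p * (of Q * (of Q)ᵀ) q j) := by
    simp only [mul_mul_apply, dotProduct, mulVec, transpose_apply, Finset.mul_sum, mul_left_comm]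
  have hintegrable (p q : ι) := (integrable_mul_transpose_apply_mul_mul_transpose_apply
    (κ := κ) i p q j).const_mul (A p q)
  simp only [of_apply, hexpand]
  rw [integral_finsetSum _ fun p _ => integrable_finsetSum _ fun q _ => hintegrable p q]
  simp_rw [integral_finsetSum _ fun q _ => hintegrable _ q, integral_const_mul,
    integral_mul_transpose_apply_mul_mul_transpose_apply]
  simp only [mul_ite, mul_one, mul_zero, mul_add, Finset.sum_add_distrib, Finset.sum_ite_eq',
    Finset.mem_univ, ↓reduceIte, Finset.sum_ite_irrel, Finset.sum_ite_eq, Finset.sum_const_zero,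
    trace, diag_apply, Finset.mul_sum, Matrix.add_apply, Matrix.smul_apply, smul_eq_mul,
    transpose_apply, one_apply]
  rw [← Finset.sum_mul, ← Finset.mul_sum]
  split_ifs <;> ring

end GaussianMatrix

theorem gaussian_expectation (m k : ℕ)
    (A : Matrix (Fin m) (Fin m) ℝ) (hA : A.IsSymm) :
    (Matrix.of fun i j => ∫ Q,
        ((Matrix.of Q) * (Matrix.of Q)ᵀ * A * ((Matrix.of Q) * (Matrix.of Q)ᵀ)) i j
          ∂(Measure.pi fun _ : Fin m => Measure.pi fun _ : Fin k => gaussianReal 0 1)) =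
      ((k : ℝ) * ((k : ℝ) + 1)) • A +
        ((k : ℝ) * Matrix.trace A) • (1 : Matrix (Fin m) (Fin m) ℝ) := by
  rw [integral_mul_transpose_mul_mul_mul_transpose, hA.eq, Fintype.card_fin]
  module
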